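/- Sharing splits potential: for any value v of type τ (respectively, of annotated type A), if share(τ; τ₁, τ₂) (respectively, share(A; A₁, A₂)) holds, then Φ(v : τ) = Φ(v : τ₁) + Φ(v : τ₂) (respectively, Φ(v : A) = Φ(v : A₁) + Φ(v : A₂)). -/
import Mathlib


set_option maxHeartbeats 1000000

open scoped ENNReal NNRat NNReal
open Classical

noncomputable section

/-! ## Syntax -/

/-- Rational probabilities `p ∈ [0,1]`. -/
abbrev Probability : Type := {p : ℚ≥0 // p ≤ 1}

/-- Expressions of the probabilistic language in share-let-normal form (Figure 3). -/
inductive Expr : Type where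
  | var (x : ℕ)                                          -- variable
  | unit                                                 -- null tuple
  | nil                                                  -- empty list
  | cons (x₁ x₂ : ℕ)                                     -- cons list
  | matL (x : ℕ) (e₀ : Expr) (x₁ x₂ : ℕ) (e₁ : Expr)     -- pattern match
  | fn (f x : ℕ) (e : Expr)                              -- recursive function
  | app (x₁ x₂ : ℕ)                                      -- application
  | tick (q : ℚ≥0)                                       -- cost
  | elet (e₁ : Expr) (x : ℕ) (e₂ : Expr)                 -- definition
  | share (x x₁ x₂ : ℕ) (e : Expr)                       -- sharing
  | flip (p : Probability) (e₁ e₂ : Expr)                -- coin flip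
  | prob (p : Probability)                               -- probability literal
  | flipS (x : ℕ) (e₁ e₂ : Expr)                         -- symbolic flip

/-- Values: unit, lists, probability values and function closures. -/
inductive Val : Type where
  | unit
  | nil
  | cons (v₁ v₂ : Val)
  | prob (p : Probability)
  | clos (V : List (ℕ × Val)) (f x : ℕ) (e : Expr)

/-- Evaluation environments: finite maps from variables to values. -/
abbrev Env : Type := List (ℕ × Val)

/-- Environment lookup `V(x)`. -/
def Env.find : Env → ℕ → Option Val
  | [], _ => none
  | (y, v) :: V, x => if y = x then some v else Env.find V x

/-! ## Trace-based cost semantics (Figure 5) -/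

/-- Outcomes of coin flips. -/
inductive Coin : Type where
  | H
  | T

/-- Trace-based evaluation judgment `V ⊢ e ⇓ v | q` with probability `p` and
trace `σ` (Figure 5). -/
inductive Eval : Env → Expr → Val → ℚ≥0 → ℚ≥0 → List Coin → Prop where
  | var : Env.find V x = some v → Eval V (.var x) v 0 1 []
  | unit : Eval V .unit .unit 0 1 []
  | nil : Eval V .nil .nil 0 1 []
  | cons : Env.find V x₁ = some v₁ → Env.find V x₂ = some v₂ →
      Eval V (.cons x₁ x₂) (.cons v₁ v₂) 0 1 []
  | matL₁ : Env.find V x = some .nil → Eval V e₀ v q p σ →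
      Eval V (.matL x e₀ x₁ x₂ e₁) v q p σ
  | matL₂ : Env.find V x = some (.cons v₁ v₂) →
      Eval ((x₁, v₁) :: (x₂, v₂) :: V) e₁ v q p σ →
      Eval V (.matL x e₀ x₁ x₂ e₁) v q p σ
  | tick : Eval V (.tick q) .unit q 1 []
  | elet : Eval V e₁ v₁ q₁ p₁ σ₁ → Eval ((x, v₁) :: V) e₂ v₂ q₂ p₂ σ₂ →
      Eval V (.elet e₁ x e₂) v₂ (q₁ + q₂) (p₁ * p₂) (σ₁ ++ σ₂)
  | fn : Eval V (.fn f x e) (.clos V f x e) 0 1 []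
  | app : Env.find V x₁ = some (.clos V' f x e) → Env.find V x₂ = some v₂ →
      Eval ((f, .clos V' f x e) :: (x, v₂) :: V') e v q p σ →
      Eval V (.app x₁ x₂) v q p σ
  | flip₁ : Eval V e₁ v₁ q₁ p₁ σ →
      Eval V (.flip p e₁ e₂) v₁ q₁ (p.1 * p₁) (.H :: σ)
  | flip₂ : Eval V e₂ v₂ q₂ p₂ σ →
      Eval V (.flip p e₁ e₂) v₂ q₂ ((1 - p.1) * p₂) (.T :: σ)
  | share : Env.find V x = some v →
      Eval ((x₁, v) :: (x₂, v) :: V) e v' q p σ →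
      Eval V (.share x x₁ x₂ e) v' q p σ
  | prob : Eval V (.prob p) (.prob p) 0 1 []
  | flipS₁ : Env.find V x = some (.prob p) → Eval V e₁ v₁ q₁ p₁ σ →
      Eval V (.flipS x e₁ e₂) v₁ q₁ (p.1 * p₁) (.H :: σ)
  | flipS₂ : Env.find V x = some (.prob p) → Eval V e₂ v₂ q₂ p₂ σ →
      Eval V (.flipS x e₁ e₂) v₂ q₂ ((1 - p.1) * p₂) (.T :: σ)

/-! ## Types and potential (Figure 4) -/

/-- Types: unit, lists `L(⟨τ, q⟩)`, arrows `⟨τ₁,q₁⟩ → ⟨τ₂,q₂⟩`, and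
probability types `prob(q_H, q_T)`. -/
inductive Ty : Type where
  | unit
  | list (τ : Ty) (q : ℚ≥0)
  | arrow (τ₁ : Ty) (q₁ : ℚ≥0) (τ₂ : Ty) (q₂ : ℚ≥0)
  | prob (qH qT : ℚ≥0)

/-- Potential-annotated types `A = ⟨τ, q⟩`. -/
abbrev ATy : Type := Ty × ℚ≥0

/-- The potential function `Φ(v : τ)`. -/
def pot : Val → Ty → ℚ≥0
  | .cons v₁ v₂, .list τ q => (pot v₁ τ + q) + pot v₂ (.list τ q)
  | .prob p, .prob qH qT => qH * p.1 + qT * (1 - p.1)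
  | _, _ => 0

/-- The potential function `Φ(v : A)` for annotated types `A = ⟨τ, q⟩`. -/
def potA (v : Val) (A : ATy) : ℚ≥0 := pot v A.1 + A.2

/-- The value `[v₁, …, vₙ]` corresponding to a Lean list of values. -/
def listVal : List Val → Val
  | [] => .nil
  | v :: vs => .cons v (listVal vs)

/-- The sharing relation `share(τ; τ₁, τ₂)`. -/
inductive Share : Ty → Ty → Ty → Prop where
  | unit : Share .unit .unit .unit
  | list : Share τ τ₁ τ₂ → q = q₁ + q₂ →
      Share (.list τ q) (.list τ₁ q₁) (.list τ₂ q₂)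
  | arrow : Share (.arrow τ₁ q₁ τ₂ q₂) (.arrow τ₁ q₁ τ₂ q₂) (.arrow τ₁ q₁ τ₂ q₂)
  | prob : qH = qH₁ + qH₂ → qT = qT₁ + qT₂ →
      Share (.prob qH qT) (.prob qH₁ qT₁) (.prob qH₂ qT₂)

/-- Sharing for annotated types: `share(⟨τ,q⟩; ⟨τ₁,q₁⟩, ⟨τ₂,q₂⟩)`. -/
def ShareA (A A₁ A₂ : ATy) : Prop := Share A.1 A₁.1 A₂.1 ∧ A.2 = A₁.2 + A₂.2

/-- Potential scaling `p × τ`. -/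
def scaleTy (p : ℚ≥0) : Ty → Ty
  | .unit => .unit
  | .list τ q => .list (scaleTy p τ) (p * q)
  | .arrow τ₁ q₁ τ₂ q₂ => .arrow τ₁ q₁ τ₂ q₂
  | .prob qH qT => .prob (p * qH) (p * qT)

/-- Potential scaling `p × A` for annotated types. -/
def scaleA (p : ℚ≥0) (A : ATy) : ATy := (scaleTy p A.1, p * A.2)

/-- Typing contexts. -/
abbrev Ctx : Type := List (ℕ × Ty)

/-- Scaling of typing contexts `p × Γ`. -/
def scaleCtx (p : ℚ≥0) (Γ : Ctx) : Ctx := Γ.map fun xt => (xt.1, scaleTy p xt.2)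

/-- Zeroing of potential annotations `|τ|`. -/
def zeroTy : Ty → Ty
  | .unit => .unit
  | .list τ _ => .list (zeroTy τ) 0
  | .arrow τ₁ q₁ τ₂ q₂ => .arrow τ₁ q₁ τ₂ q₂
  | .prob _ _ => .prob 0 0

/-- Zeroing of contexts `|Γ|`. -/
def zeroCtx (Γ : Ctx) : Ctx := Γ.map fun xt => (xt.1, zeroTy xt.2)

/-- The sharing relation lifted pointwise to typing contexts. -/
inductive ShareCtx : Ctx → Ctx → Ctx → Prop where
  | nil : ShareCtx [] [] []
  | cons : Share τ τ₁ τ₂ → ShareCtx Γ Γ₁ Γ₂ →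
      ShareCtx ((x, τ) :: Γ) ((x, τ₁) :: Γ₁) ((x, τ₂) :: Γ₂)

/-- Subtyping `τ <: τ'`. -/
inductive SubTy : Ty → Ty → Prop where
  | unit : SubTy .unit .unit
  | list : SubTy τ₁ τ₂ → q₁ ≥ q₂ → SubTy (.list τ₁ q₁) (.list τ₂ q₂)
  | arrow : SubTy τ₂ τ₁ → q₂ ≥ q₁ → SubTy σ₁ σ₂ → p₁ ≥ p₂ →
      SubTy (.arrow τ₁ q₁ σ₁ p₁) (.arrow τ₂ q₂ σ₂ p₂)
  | prob : qH₁ ≥ qH₂ → qT₁ ≥ qT₂ → SubTy (.prob qH₁ qT₁) (.prob qH₂ qT₂)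

/-! ## The affine typing judgment (Figure 6) -/

/-- The typing judgment `Γ; q ⊢ e : A` of Figure 6. -/
inductive Typing : Ctx → ℚ≥0 → Expr → ATy → Prop where
  | var : Typing [(x, τ)] 0 (.var x) (τ, 0)
  | unit : Typing [] 0 .unit (.unit, 0)
  | nil : Typing [] 0 .nil (.list τ p, 0)
  | cons : Typing [(x₁, τ), (x₂, .list τ p)] p (.cons x₁ x₂) (.list τ p, 0)
  | matL : Typing Γ q e₀ B →
      Typing ((x₁, τ) :: (x₂, .list τ p) :: Γ) (q + p) e₁ B →
      Typing ((x, .list τ p) :: Γ) q (.matL x e₀ x₁ x₂ e₁) B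
  | tick : Typing [] q (.tick q) (.unit, 0)
  | elet : Typing Γ₁ q e₁ (τ, p) → Typing ((x, τ) :: Γ₂) p e₂ B →
      Typing (Γ₁ ++ Γ₂) q (.elet e₁ x e₂) B
  | app : Typing [(x₁, .arrow τ q σ p), (x₂, τ)] q (.app x₁ x₂) (σ, p)
  | fn : zeroCtx Γ = Γ →
      Typing ((f, .arrow τ q σ p) :: (x, τ) :: Γ) q e (σ, p) →
      Typing Γ 0 (.fn f x e) (.arrow τ q σ p, 0)
  | share : Share τ τ₁ τ₂ →
      Typing ((x₁, τ₁) :: (x₂, τ₂) :: Γ) q e B →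
      Typing ((x, τ) :: Γ) q (.share x x₁ x₂ e) B
  | flip : ShareCtx Γ (scaleCtx p.1 Γ₁) (scaleCtx (1 - p.1) Γ₂) →
      q = p.1 * q₁ + (1 - p.1) * q₂ →
      Typing Γ₁ q₁ e₁ A → Typing Γ₂ q₂ e₂ A →
      Typing Γ q (.flip p e₁ e₂) A
  | prob : q = p.1 * qH + (1 - p.1) * qT →
      Typing [] q (.prob p) (.prob qH qT, 0)
  | flipS : Typing Γ (q + qH) e₁ A → Typing Γ (q + qT) e₂ A →
      Typing ((x, .prob qH qT) :: Γ) q (.flipS x e₁ e₂) A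
  | sub : Typing Γ q e (τ', q') → SubTy τ' τ → Typing Γ q e (τ, q')
  | sup : Typing ((x, τ) :: Γ) q e B → SubTy τ' τ → Typing ((x, τ') :: Γ) q e B
  | weak : Typing Γ q e B → Typing ((x, τ) :: Γ) q e B
  | relax : ∀ {Γ : Ctx} {p q p' q' : ℚ≥0} {τ : Ty} {e : Expr},
      Typing Γ p e (τ, p') → p ≤ q → (p : ℚ) - (p' : ℚ) ≤ (q : ℚ) - (q' : ℚ) →
      Typing Γ q e (τ, q')
  | exch : Typing Γ q e B → Γ.Perm Γ' → Typing Γ' q e B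

/-! ## Value and environment typing (Figure 8) -/

mutual
  /-- The value typing judgment `v : τ` (Figure 8); it ignores potential
  annotations. -/
  inductive VTy : Val → Ty → Prop where
    | unit : VTy .unit .unit
    | prob : VTy (.prob p) (.prob qH qT)
    | nil : VTy .nil (.list τ q)
    | cons : VTy v₁ τ → VTy v₂ (.list τ q) → VTy (.cons v₁ v₂) (.list τ q)
    | clos : EnvTy V Γ →
        Typing ((f, .arrow τ q σ p) :: (x, τ) :: zeroCtx Γ) q e (σ, p) →
        VTy (.clos V f x e) (.arrow τ q σ p)

  /-- `V : Γ` : the environment `V` has typing context `Γ`. -/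
  inductive EnvTy : Env → Ctx → Prop where
    | nil : EnvTy V []
    | cons : Env.find V x = some v → VTy v τ → EnvTy V Γ → EnvTy V ((x, τ) :: Γ)
end

/-- The potential `Φ(V : Γ)` of an environment with respect to a context. -/
def potCtx (V : Env) (Γ : Ctx) : ℚ≥0 :=
  (Γ.map fun xt => ((Env.find V xt.1).map fun v => pot v xt.2).getD 0).sum

/-! ## Distribution-based cost semantics (Figure 7) -/

/-- Embedding of nonnegative rationals into `ℝ≥0∞`. -/
def qe (q : ℚ≥0) : ℝ≥0∞ := ((q : ℝ≥0) : ℝ≥0∞)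

/-- The point distribution `δ(a)`. -/
def dirac {α : Type*} (a : α) : α → ℝ≥0∞ := fun b => if b = a then 1 else 0

/-- Subprobability distributions on value–cost pairs. -/
abbrev SubDist : Type := Val × ℚ≥0 → ℝ≥0∞

/-- Monadic composition used in rule DE:Let: costs are added. -/
def letBind (μ : SubDist) (κ : Val × ℚ≥0 → SubDist) : SubDist := fun b =>
  ∑' a₁ : Val × ℚ≥0, ∑' a₂ : Val × ℚ≥0,
    μ a₁ * κ a₁ a₂ * dirac (a₂.1, a₁.2 + a₂.2) b

/-- Depth-indexed distribution-based evaluation judgment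
`V ⊢ e ⇒ μ` within `n` steps (Figure 7). -/
inductive Step : Env → Expr → SubDist → ℕ → Prop where
  | base : Step V e (fun _ => 0) 0
  | var : 0 < n → Env.find V x = some v → Step V (.var x) (dirac (v, 0)) n
  | unit : 0 < n → Step V .unit (dirac (.unit, 0)) n
  | nil : 0 < n → Step V .nil (dirac (.nil, 0)) n
  | cons : 0 < n → Env.find V x₁ = some v₁ → Env.find V x₂ = some v₂ →
      Step V (.cons x₁ x₂) (dirac (.cons v₁ v₂, 0)) n
  | matL₁ : Env.find V x = some .nil → Step V e₀ μ n →
      Step V (.matL x e₀ x₁ x₂ e₁) μ (n + 1)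
  | matL₂ : Env.find V x = some (.cons v₁ v₂) →
      Step ((x₁, v₁) :: (x₂, v₂) :: V) e₁ μ n →
      Step V (.matL x e₀ x₁ x₂ e₁) μ (n + 1)
  | tick : 0 < n → Step V (.tick q) (dirac (.unit, q)) n
  | fn : 0 < n → Step V (.fn f x e) (dirac (.clos V f x e, 0)) n
  | app : Env.find V x₁ = some (.clos V' f x e) → Env.find V x₂ = some v₂ →
      Step ((f, .clos V' f x e) :: (x, v₂) :: V') e μ n →
      Step V (.app x₁ x₂) μ (n + 1)
  | elet : Step V e₁ μ n →
      (∀ a : Val × ℚ≥0, μ a ≠ 0 → Step ((x, a.1) :: V) e₂ (κ a) n) →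
      Step V (.elet e₁ x e₂) (letBind μ κ) (n + 1)
  | share : Env.find V x = some v →
      Step ((x₁, v) :: (x₂, v) :: V) e μ n →
      Step V (.share x x₁ x₂ e) μ (n + 1)
  | flip : Step V e₁ μ₁ n → Step V e₂ μ₂ n →
      Step V (.flip p e₁ e₂) (fun a => qe p.1 * μ₁ a + qe (1 - p.1) * μ₂ a) (n + 1)
  | prob : 0 < n → Step V (.prob p) (dirac (.prob p, 0)) n
  | flipS : Env.find V x = some (.prob p) → Step V e₁ μ₁ n → Step V e₂ μ₂ n →
      Step V (.flipS x e₁ e₂) (fun a => qe p.1 * μ₁ a + qe (1 - p.1) * μ₂ a) (n + 1)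

/-- `⟦e⟧_⇒^V`: the pointwise supremum of all distributions derivable in the
depth-indexed distribution-based semantics. -/
def dsem (V : Env) (e : Expr) : SubDist := fun a =>
  ⨆ (n : ℕ) (μ : SubDist) (_ : Step V e μ n), μ a

/-- `⟦e⟧_⇓^V(v, q) = Σ_σ p_σ`, summing the probabilities of all finite traces
with which `e` evaluates to `v` with cost `q`. -/
def tsem (V : Env) (e : Expr) : SubDist := fun a =>
  ∑' σ : List Coin, ⨆ (p : ℚ≥0) (_ : Eval V e a.1 a.2 p σ), qe p

/-- `νₙ`: the restriction of `⟦e⟧_⇓^V` to traces of length at most `n`. -/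
def tsemN (V : Env) (e : Expr) (n : ℕ) : SubDist := fun a =>
  ∑' σ : List Coin,
    if σ.length ≤ n then ⨆ (p : ℚ≥0) (_ : Eval V e a.1 a.2 p σ), qe p else 0

end

lemma pot_share : ∀ (v : Val) (τ τ₁ τ₂ : Ty), VTy v τ → Share τ τ₁ τ₂ →
    pot v τ = pot v τ₁ + pot v τ₂
  | .unit, _, _, _, _, hs => by cases hs <;> simp [pot]
  | .nil, _, _, _, _, hs => by cases hs <;> simp [pot]
  | .prob p, _, _, _, hv, hs => by
      cases hv
      cases hs with
      | prob h1 h2 => subst h1; subst h2; simp only [pot]; ring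
  | .cons v₁ v₂, _, _, _, hv, hs => by
      cases hv with
      | cons hv1 hv2 =>
          cases hs with
          | list hsτ hq =>
              subst hq
              simp only [pot]
              rw [pot_share v₁ _ _ _ hv1 hsτ,
                pot_share v₂ _ _ _ hv2 (Share.list hsτ rfl)]
              ring
  | .clos V f x e, _, _, _, hv, hs => by cases hv; cases hs; simp [pot]

/-- **Sharing splits potential** (Lemma 4.1): for any value `v` of type `τ`
(resp. of annotated type `A`), if `share(τ; τ₁, τ₂)` (resp. `share(A; A₁, A₂)`)
then `Φ(v : τ) = Φ(v : τ₁) + Φ(v : τ₂)`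
(resp. `Φ(v : A) = Φ(v : A₁) + Φ(v : A₂)`). -/
theorem sharing_splits_potential :

    (∀ (v : Val) (τ τ₁ τ₂ : Ty), VTy v τ → Share τ τ₁ τ₂ →
        pot v τ = pot v τ₁ + pot v τ₂) ∧
    (∀ (v : Val) (A A₁ A₂ : ATy), VTy v A.1 → ShareA A A₁ A₂ →
        potA v A = potA v A₁ + potA v A₂) := by
  refine ⟨pot_share, ?_⟩
  rintro v A A₁ A₂ hv ⟨hs, hq⟩
  simp only [potA, pot_share v _ _ _ hv hs, hq]
  ring
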